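/- arXiv:2309.09895 — 2 statements merged into one kernel-verified Lean document; each statement's English description precedes it below -/
import Mathlib

section
/- Let Ω ⊆ ℝ^n (n ≥ 2) be a nonempty open set and let c : Ω → ℝ be continuous with c ≥ 0 on Ω. Let u be continuous on the closure of Ω, twice continuously differentiable on Ω, and satisfy Δu ≥ c·u in Ω, u ≤ 0 on the frontier of Ω, and sup_Ω u < +∞. Suppose there exists a function φ, continuous on the closure of Ω and twice continuously differentiable on Ω, such that Δφ ≤ c·φ in Ω, φ > 0 on the closure of Ω, and for every ε > 0 there exists R > 0 such that u(x) ≤ ε·φ(x) for every x ∈ Ω with ‖x‖ ≥ R. Then u ≤ 0 on Ω. -/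
/-!
Fix `ε > 0` and set `w = u - εφ`. Then `Δw ≥ c w`, and `w ≤ 0` both on the frontier of `Ω` and
outside a large ball `B`, so it suffices to show `w ≤ 0` on the compact set `closure Ω ∩ B`. There
one maximises `w + δ‖x‖²` for `δ > 0`: at a maximum point where `w > 0` the point lies in the open
set `Ω ∩ B`, so the Laplacian there is `≤ 0`, while `Δ(w + δ‖x‖²) ≥ c w + 2nδ > 0`. Hence
`w ≤ δ sup ‖x‖²` on the compact set; letting `δ → 0` and then `ε → 0` gives `u ≤ 0`.
-/

/-- The Euclidean Laplacian `Δu = ∑ i ∂²u/∂xᵢ²`. -/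
noncomputable def laplacian {n : ℕ} (u : EuclideanSpace ℝ (Fin n) → ℝ)
    (x : EuclideanSpace ℝ (Fin n)) : ℝ :=
  ∑ i : Fin n, fderiv ℝ (fun y => fderiv ℝ u y (EuclideanSpace.single i 1)) x
    (EuclideanSpace.single i 1)

open Filter Topology Set

theorem nonpos_of_forall_pos_le_mul {a C : ℝ} (h : ∀ ε > 0, a ≤ ε * C) : a ≤ 0 := by
  have hlim : Tendsto (fun ε : ℝ => ε * C) (𝓝[>] 0) (𝓝 0) := by
    simpa using (tendsto_id.mul_const C).mono_left (nhdsWithin_le_nhds (a := (0 : ℝ)))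
  exact ge_of_tendsto hlim (eventually_nhdsWithin_of_forall h)

theorem IsLocalMax.deriv_deriv_nonpos {f : ℝ → ℝ} {x₀ : ℝ} (h : IsLocalMax f x₀)
    (hc : ContinuousAt f x₀) : deriv (deriv f) x₀ ≤ 0 := by
  by_contra! hpos
  -- The second-derivative test makes `x₀` also a local minimum, so `f` is locally constant.
  have hmin := isLocalMin_of_deriv_deriv_pos hpos h.deriv_eq_zero hc
  have hconst : f =ᶠ[𝓝 x₀] fun _ => f x₀ :=
    (hmin.and h).mono fun x hx => le_antisymm hx.2 hx.1
  have hderiv : deriv f =ᶠ[𝓝 x₀] fun _ => 0 :=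
    hconst.eventuallyEq_nhds.mono fun x hx => by rw [hx.deriv_eq, deriv_const]
  simp [hderiv.deriv_eq] at hpos

theorem IsLocalMax.fderiv_fderiv_apply_nonpos {E : Type*} [NormedAddCommGroup E]
    [NormedSpace ℝ E] {g : E → ℝ} {z : E} (h : IsLocalMax g z) (hg : ContDiffAt ℝ 2 g z)
    (s : E) : fderiv ℝ (fun y => fderiv ℝ g y s) z s ≤ 0 := by
  obtain ⟨line, rfl, hline⟩ : ∃ line : ℝ → E, line 0 = z ∧ ∀ t, HasDerivAt line s t :=
    ⟨fun t => z + t • s, by simp, fun t => by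
      simpa using ((hasDerivAt_id' t).smul_const s).const_add z⟩
  have hderiv : deriv (g ∘ line) =ᶠ[𝓝 0] (fun y => fderiv ℝ g y s) ∘ line := by
    filter_upwards [(hline 0).continuousAt.eventually (hg.eventually (by norm_num))] with t ht
    exact ((ht.differentiableAt (by norm_num)).hasFDerivAt.comp_hasDerivAt t (hline t)).deriv
  have hdiff : DifferentiableAt ℝ (fun y => fderiv ℝ g y s) (line 0) :=
    ((hg.fderiv_right (m := 1) le_rfl).differentiableAt one_ne_zero).clm_apply
      (differentiableAt_const s)
  have hsecond : deriv (deriv (g ∘ line)) 0 = fderiv ℝ (fun y => fderiv ℝ g y s) (line 0) s := by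
    rw [hderiv.deriv_eq]
    exact (hdiff.hasFDerivAt.comp_hasDerivAt 0 (hline 0)).deriv
  rw [← hsecond]
  exact (h.comp_continuous (hline 0).continuousAt).deriv_deriv_nonpos
    (hg.continuousAt.comp (hline 0).continuousAt)

section Laplacian

variable {n : ℕ}

open InnerProductSpace in
open scoped Laplacian in
theorem ContDiffAt.laplacian_eq {f : EuclideanSpace ℝ (Fin n) → ℝ}
    {x : EuclideanSpace ℝ (Fin n)} (hf : ContDiffAt ℝ 2 f x) : laplacian f x = Δ f x := by
  rw [laplacian_eq_iteratedFDeriv_orthonormalBasis f (EuclideanSpace.basisFun (Fin n) ℝ)]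
  refine Finset.sum_congr rfl fun i _ => ?_
  rw [iteratedFDeriv_two_apply]
  simp only [EuclideanSpace.basisFun_apply, Matrix.cons_val_zero, Matrix.cons_val_one]
  rw [fderiv_clm_apply ((hf.fderiv_right (m := 1) le_rfl).differentiableAt one_ne_zero)
    (differentiableAt_const _)]
  simp

theorem laplacian_add_smul {f g : EuclideanSpace ℝ (Fin n) → ℝ} {x : EuclideanSpace ℝ (Fin n)}
    (hf : ContDiffAt ℝ 2 f x) (hg : ContDiffAt ℝ 2 g x) (a : ℝ) :
    laplacian (f + a • g) x = laplacian f x + a * laplacian g x := by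
  rw [ContDiffAt.laplacian_eq (f := f + a • g) (hf.add (hg.const_smul a)), hf.laplacian_eq,
    hg.laplacian_eq, ContDiffAt.laplacian_add (f₂ := a • g) hf (hg.const_smul a),
    InnerProductSpace.laplacian_smul a hg, smul_eq_mul]

theorem laplacian_norm_sq (x : EuclideanSpace ℝ (Fin n)) :
    laplacian (fun y => ‖y‖ ^ 2) x = 2 * n := by
  have hfderiv : ∀ s, (fun y : EuclideanSpace ℝ (Fin n) => fderiv ℝ (fun y => ‖y‖ ^ 2) y s)
      = fun y => 2 * innerSL ℝ s y := fun s => by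
    funext y
    rw [(hasStrictFDerivAt_norm_sq y).hasFDerivAt.fderiv]
    simp [real_inner_comm]
  simp only [laplacian, hfderiv, ((innerSL ℝ _).hasFDerivAt.const_mul 2).fderiv]
  simp [mul_comm]

theorem IsLocalMax.laplacian_nonpos {g : EuclideanSpace ℝ (Fin n) → ℝ}
    {z : EuclideanSpace ℝ (Fin n)} (h : IsLocalMax g z) (hg : ContDiffAt ℝ 2 g z) :
    laplacian g z ≤ 0 :=
  Finset.sum_nonpos fun _ _ => h.fderiv_fderiv_apply_nonpos hg _

theorem laplacian_add_neg_smul_nonneg {u φ : EuclideanSpace ℝ (Fin n) → ℝ}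
    {z : EuclideanSpace ℝ (Fin n)} {c ε : ℝ} (hu : ContDiffAt ℝ 2 u z)
    (hφ : ContDiffAt ℝ 2 φ z) (hc : 0 ≤ c) (hε : 0 ≤ ε) (hu_sub : c * u z ≤ laplacian u z)
    (hφ_super : laplacian φ z ≤ c * φ z) (hw : 0 ≤ u z - ε * φ z) :
    0 ≤ laplacian (u + (-ε) • φ) z := by
  rw [laplacian_add_smul hu hφ]
  nlinarith [mul_le_mul_of_nonneg_left hφ_super hε, mul_nonneg hc hw]

theorem nonpos_on_of_laplacian_nonneg_of_isCompact (hn : 0 < n)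
    {K U : Set (EuclideanSpace ℝ (Fin n))} {w : EuclideanSpace ℝ (Fin n) → ℝ}
    (hK : IsCompact K) (hU : IsOpen U) (hUK : U ⊆ K) (hw_cont : ContinuousOn w K)
    (hw_reg : ContDiffOn ℝ 2 w U) (hw_sub : ∀ z ∈ U, 0 < w z → 0 ≤ laplacian w z)
    (hw_out : ∀ z ∈ K \ U, w z ≤ 0) :
    ∀ x ∈ K, w x ≤ 0 := by
  intro x hx
  set q : EuclideanSpace ℝ (Fin n) → ℝ := fun y => ‖y‖ ^ 2
  have hq : Continuous q := by fun_prop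
  obtain ⟨M, hM⟩ := (hK.image_of_continuousOn hq.continuousOn).bddAbove
  refine nonpos_of_forall_pos_le_mul (C := M) fun δ hδ => ?_
  obtain ⟨z, hzK, hzmax⟩ :=
    hK.exists_isMaxOn ⟨x, hx⟩ (hw_cont.add (hq.continuousOn.const_smul δ))
  have hwz : w z ≤ 0 := by
    by_contra! hpos
    have hzU : z ∈ U := by_contra fun hzU => hpos.not_ge (hw_out z ⟨hzK, hzU⟩)
    have hw_z : ContDiffAt ℝ 2 w z := hw_reg.contDiffAt (hU.mem_nhds hzU)
    have hq_z : ContDiffAt ℝ 2 q z := (contDiff_norm_sq ℝ).contDiffAt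
    have hmax : IsLocalMax (w + δ • q) z :=
      hzmax.isLocalMax (mem_of_superset (hU.mem_nhds hzU) hUK)
    have hlap := hmax.laplacian_nonpos (hw_z.add (hq_z.const_smul δ))
    rw [laplacian_add_smul hw_z hq_z, laplacian_norm_sq] at hlap
    have hn' : (0 : ℝ) < n := by exact_mod_cast hn
    nlinarith [hw_sub z hzU hpos]
  calc w x ≤ w x + δ * q x := le_add_of_nonneg_right (by positivity)
    _ ≤ w z + δ * q z := hzmax hx
    _ ≤ δ * M := by nlinarith [hM (mem_image_of_mem q hzK)]

end Laplacian

theorem maximum_principle_with_barrier_general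
    (n : ℕ) (hn : 2 ≤ n)
    (Ω : Set (EuclideanSpace ℝ (Fin n)))
    (hΩopen : IsOpen Ω)
    (c : EuclideanSpace ℝ (Fin n) → ℝ)
    (hc_nonneg : ∀ x ∈ Ω, 0 ≤ c x)
    (u : EuclideanSpace ℝ (Fin n) → ℝ)
    (hu_cont : ContinuousOn u (closure Ω))
    (hu_reg : ContDiffOn ℝ 2 u Ω)
    (hu_sub : ∀ x ∈ Ω, c x * u x ≤ laplacian u x)
    (hu_bdry : ∀ x ∈ frontier Ω, u x ≤ 0)
    (φ : EuclideanSpace ℝ (Fin n) → ℝ)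
    (hφ_cont : ContinuousOn φ (closure Ω))
    (hφ_reg : ContDiffOn ℝ 2 φ Ω)
    (hφ_super : ∀ x ∈ Ω, laplacian φ x ≤ c x * φ x)
    (hφ_pos : ∀ x ∈ closure Ω, 0 < φ x)
    (hlimsup : ∀ ε > (0:ℝ), ∃ R > (0:ℝ), ∀ x ∈ Ω, R ≤ ‖x‖ → u x ≤ ε * φ x) :
    ∀ x ∈ Ω, u x ≤ 0 := by
  intro x₀ hx₀
  refine nonpos_of_forall_pos_le_mul (C := φ x₀) fun ε hε => ?_
  obtain ⟨R, -, hR⟩ := hlimsup ε hε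
  set w := u + (-ε) • φ
  have hw_apply : ∀ z, w z = u z - ε * φ z := fun z => by simp [w, sub_eq_add_neg]
  set K := closure Ω ∩ Metric.closedBall 0 (max R ‖x₀‖)
  set U := Ω ∩ Metric.ball 0 R
  have hUK : U ⊆ K := inter_subset_inter subset_closure
    (Metric.ball_subset_closedBall.trans (Metric.closedBall_subset_closedBall (le_max_left _ _)))
  have hw_out : ∀ z ∈ K \ U, w z ≤ 0 := by
    rintro z ⟨⟨hz_cl, -⟩, hzU⟩
    rw [hw_apply]
    by_cases hzΩ : z ∈ Ω
    · linarith [hR z hzΩ (by simpa [U, hzΩ] using hzU)]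
    · have hz_fr : z ∈ frontier Ω := ⟨hz_cl, by rwa [hΩopen.interior_eq]⟩
      nlinarith [hu_bdry z hz_fr, hφ_pos z hz_cl]
  have hw_nonpos := nonpos_on_of_laplacian_nonneg_of_isCompact (by omega)
    ((isCompact_closedBall _ _).inter_left isClosed_closure) (hΩopen.inter Metric.isOpen_ball) hUK
    ((hu_cont.add (hφ_cont.const_smul _)).mono inter_subset_left)
    ((hu_reg.add (hφ_reg.const_smul _)).mono inter_subset_left)
    (fun z hz hwz => laplacian_add_neg_smul_nonneg (hu_reg.contDiffAt (hΩopen.mem_nhds hz.1))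
      (hφ_reg.contDiffAt (hΩopen.mem_nhds hz.1)) (hc_nonneg z hz.1) hε.le (hu_sub z hz.1)
      (hφ_super z hz.1) (hw_apply z ▸ hwz.le))
    hw_out x₀ ⟨subset_closure hx₀, by simp⟩
  linarith [hw_apply x₀]

/-- Maximum principle via a positive supersolution barrier dominating `u` at infinity. -/
theorem maximum_principle_with_barrier
    (n : ℕ) (hn : 2 ≤ n)
    (Ω : Set (EuclideanSpace ℝ (Fin n)))
    (hΩopen : IsOpen Ω) (hΩne : Ω.Nonempty)
    (c : EuclideanSpace ℝ (Fin n) → ℝ)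
    (hc_cont : ContinuousOn c Ω) (hc_nonneg : ∀ x ∈ Ω, 0 ≤ c x)
    (u : EuclideanSpace ℝ (Fin n) → ℝ)
    (hu_cont : ContinuousOn u (closure Ω))
    (hu_reg : ContDiffOn ℝ 2 u Ω)
    (hu_sub : ∀ x ∈ Ω, c x * u x ≤ laplacian u x)
    (hu_bdry : ∀ x ∈ frontier Ω, u x ≤ 0)
    (hu_bdd : BddAbove (u '' Ω))
    (φ : EuclideanSpace ℝ (Fin n) → ℝ)
    (hφ_cont : ContinuousOn φ (closure Ω))
    (hφ_reg : ContDiffOn ℝ 2 φ Ω)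
    (hφ_super : ∀ x ∈ Ω, laplacian φ x ≤ c x * φ x)
    (hφ_pos : ∀ x ∈ closure Ω, 0 < φ x)
    (hlimsup : ∀ ε > (0:ℝ), ∃ R > (0:ℝ), ∀ x ∈ Ω, R ≤ ‖x‖ → u x ≤ ε * φ x) :
    ∀ x ∈ Ω, u x ≤ 0 :=
  maximum_principle_with_barrier_general n hn Ω hΩopen c hc_nonneg u hu_cont hu_reg hu_sub hu_bdry φ
    hφ_cont hφ_reg hφ_super hφ_pos hlimsup
end

section
/- Let n ≥ 2 and let Ω ⊆ ℝ^n be a nonempty open connected set whose closure is contained in the complement of a non-degenerate solid cone C ⊂ ℝ^n. Then Ω is Dirichlet parabolic: every bounded function u that is continuous on the closure of Ω, twice continuously differentiable on Ω, harmonic in Ω (Δu = 0 on Ω), and vanishes on the frontier of Ω, vanishes identically on Ω. -/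
/-!
Let `u` be subharmonic and bounded above on `Ω`, with `u ≤ 0` on `∂Ω`, and suppose
`s = sup_Ω u > 0`. For `z ∈ Ω` put `t = |z - p| / 2` and `q = p + t e`: the ball `B(q, δ t)`,
`δ = (1 - cos θ) / 2`, lies in the cone, so `Ω̄` stays at distance `≥ δ t` from `q`, while
`|z - q| ≤ 3 t`. On `Ω ∩ B(q, 4 t)`, compare `u` with the strictly subharmonic barrier
`|y - q|^(-2n)` (Laplacian `2n(n + 2)|y - q|^(-2n-2)`) through the weak maximum principle: this
gives `u z ≤ ρ s` with `ρ < 1` independent of `t` by scaling. Hence `s ≤ ρ s`, a contradiction.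
Apply this to `u` and `-u`.
-/

open scoped RealInnerProductSpace

open Filter Set Topology

theorem IsLocalMax.nonpos_of_hasDerivAt_deriv {g g' : ℝ → ℝ} {x A : ℝ} (hmax : IsLocalMax g x)
    (hg : ∀ᶠ y in 𝓝 x, HasDerivAt g (g' y) y) (hg' : HasDerivAt g' A x) : A ≤ 0 := by
  by_contra! hA
  have hsign := eventually_nhdsWithin_sign_eq_of_deriv_pos (hg'.deriv ▸ hA)
    (hmax.hasDerivAt_eq_zero hg.self_of_nhds)
  obtain ⟨ε, hε, hnear⟩ := Metric.eventually_nhds_iff.1 (hg.and (Filter.Eventually.and hmax hsign))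
  have hIcc : ∀ y ∈ Icc x (x + ε / 2), dist y x < ε := fun y hy => by
    rw [Real.dist_eq, abs_of_nonneg (by linarith [hy.1])]
    linarith [hy.2]
  obtain ⟨ξ, hξ, hslope⟩ := exists_hasDerivAt_eq_slope g g' (by linarith : x < x + ε / 2)
    (fun y hy => (hnear (hIcc y hy)).1.continuousAt.continuousWithinAt)
    (fun y hy => (hnear (hIcc y (Ioo_subset_Icc_self hy))).1)
  have hξpos : 0 < g' ξ := by
    have h := (hnear (hIcc ξ (Ioo_subset_Icc_self hξ))).2.2
    rwa [sign_pos (sub_pos.2 hξ.1), sign_eq_one_iff] at h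
  have hle : g (x + ε / 2) ≤ g x := (hnear (hIcc _ ⟨by linarith, le_rfl⟩)).2.1
  rw [hslope, add_sub_cancel_left] at hξpos
  have := div_pos_iff_of_pos_right (half_pos hε) |>.1 hξpos
  linarith

section Directional

variable {F : Type*} [NormedAddCommGroup F] [NormedSpace ℝ F] {f : F → ℝ} {x : F}

theorem ContDiffAt.differentiableAt_fderiv_apply (hf : ContDiffAt ℝ 2 f x) (v : F) :
    DifferentiableAt ℝ (fun y => fderiv ℝ f y v) x :=
  ((hf.fderiv_right (m := 1) (by norm_num)).differentiableAt one_ne_zero).clm_apply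
    (differentiableAt_const v)

theorem IsLocalMax.fderiv_fderiv_apply_nonpos_s2 (hmax : IsLocalMax f x) (hf : ContDiffAt ℝ 2 f x)
    (v : F) : fderiv ℝ (fun y => fderiv ℝ f y v) x v ≤ 0 := by
  have hγ : ∀ τ : ℝ, HasDerivAt (fun τ : ℝ => x + τ • v) v τ := fun τ => by
    simpa using ((hasDerivAt_id τ).smul_const v).const_add x
  have hγx : Tendsto (fun τ : ℝ => x + τ • v) (𝓝 0) (𝓝 x) := by
    simpa using (hγ 0).continuousAt.tendsto
  have hmax' : IsLocalMax (fun τ : ℝ => f (x + τ • v)) 0 := by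
    refine IsLocalMax.comp_continuous (g := fun τ : ℝ => x + τ • v) ?_ (hγ 0).continuousAt
    simpa using hmax
  refine hmax'.nonpos_of_hasDerivAt_deriv (g' := fun τ => fderiv ℝ f (x + τ • v) v) ?_ ?_
  · filter_upwards [hγx.eventually (hf.eventually (by simp))] with τ hτ
    exact (hτ.differentiableAt (by norm_num)).hasFDerivAt.comp_hasDerivAt τ (hγ τ)
  · exact (hf.differentiableAt_fderiv_apply v).hasFDerivAt.comp_hasDerivAt_of_eq 0 (hγ 0)
      (by simp)

end Directional

section Laplacian

variable {n : ℕ} {f g : EuclideanSpace ℝ (Fin n) → ℝ} {x : EuclideanSpace ℝ (Fin n)}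

theorem laplacian_add (hf : ContDiffAt ℝ 2 f x) (hg : ContDiffAt ℝ 2 g x) :
    laplacian (fun y => f y + g y) x = laplacian f x + laplacian g x := by
  have hfg : ∀ᶠ y in 𝓝 x, fderiv ℝ (fun y => f y + g y) y = fderiv ℝ f y + fderiv ℝ g y := by
    filter_upwards [hf.eventually (by simp), hg.eventually (by simp)] with y hfy hgy
    exact fderiv_fun_add (hfy.differentiableAt (by norm_num)) (hgy.differentiableAt (by norm_num))
  rw [laplacian, laplacian, laplacian, ← Finset.sum_add_distrib]
  refine Finset.sum_congr rfl fun i _ => ?_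
  generalize EuclideanSpace.single i (1 : ℝ) = v
  have hev : (fun y => fderiv ℝ (fun y => f y + g y) y v) =ᶠ[𝓝 x]
      fun y => fderiv ℝ f y v + fderiv ℝ g y v := by
    filter_upwards [hfg] with y hy
    rw [hy, add_apply]
  rw [hev.fderiv_eq, fderiv_fun_add (hf.differentiableAt_fderiv_apply _)
    (hg.differentiableAt_fderiv_apply _), add_apply]

theorem laplacian_const_mul (a : ℝ) : laplacian (fun y => a * f y) x = a * laplacian f x := by
  have h : ∀ v, (fun y => fderiv ℝ (fun y => a * f y) y v) = a • fun y => fderiv ℝ f y v :=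
    fun v => funext fun y => by
      rw [show (fun y => a * f y) = a • f from rfl, fderiv_const_smul_field]; rfl
  simp only [laplacian, h, fderiv_const_smul_field, Finset.mul_sum]
  rfl

theorem laplacian_sub_const (c : ℝ) : laplacian (fun y => f y - c) x = laplacian f x := by
  simp only [laplacian, fderiv_sub_const]

theorem laplacian_neg : laplacian (fun y => -f y) x = -laplacian f x := by
  simpa using laplacian_const_mul (f := f) (x := x) (-1)

theorem IsLocalMax.laplacian_nonpos_s2 (hmax : IsLocalMax f x) (hf : ContDiffAt ℝ 2 f x) :
    laplacian f x ≤ 0 :=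
  Finset.sum_nonpos fun _ _ => hmax.fderiv_fderiv_apply_nonpos_s2 hf _

theorem nonpos_of_laplacian_pos {D : Set (EuclideanSpace ℝ (Fin n))} (hD : IsOpen D)
    (hDb : Bornology.IsBounded D) (hfc : ContinuousOn f (closure D)) (hf : ContDiffOn ℝ 2 f D)
    (hΔ : ∀ y ∈ D, 0 < laplacian f y) (hfr : ∀ y ∈ frontier D, f y ≤ 0) :
    ∀ y ∈ D, f y ≤ 0 := by
  intro y hy
  obtain ⟨z, hz, hzmax⟩ :=
    hDb.isCompact_closure.exists_isMaxOn ⟨y, subset_closure hy⟩ hfc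
  have hzD : z ∉ D := fun hzD =>
    ((hzmax.isLocalMax (mem_of_superset (hD.mem_nhds hzD) subset_closure)).laplacian_nonpos_s2
      (hf.contDiffAt (hD.mem_nhds hzD))).not_gt (hΔ z hzD)
  have hzfr : z ∈ frontier D := by rw [frontier, hD.interior_eq]; exact ⟨hz, hzD⟩
  exact (hzmax (subset_closure hy)).trans (hfr z hzfr)

end Laplacian

theorem contDiffAt_zpow {m : ℤ} {t : ℝ} (ht : t ≠ 0) {k : WithTop ℕ∞} :
    ContDiffAt ℝ k (fun s : ℝ => s ^ m) t := by
  obtain ⟨j, rfl | rfl⟩ := Int.eq_nat_or_neg m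
  · simpa only [zpow_natCast, id] using contDiffAt_id.pow j
  · simp only [zpow_neg, zpow_natCast]
    exact (contDiffAt_id.pow j).inv (pow_ne_zero j ht)

theorem zpow_le_zpow_left_of_nonpos₀ {a b : ℝ} {m : ℤ} (ha : 0 < a) (hab : a ≤ b) (hm : m ≤ 0) :
    b ^ m ≤ a ^ m := by
  have h := zpow_le_zpow_left₀ (neg_nonneg.2 hm) (inv_nonneg.2 (ha.trans_le hab).le)
    (inv_anti₀ ha hab)
  rwa [inv_zpow', inv_zpow', neg_neg] at h

theorem zpow_lt_zpow_left_of_neg₀ {a b : ℝ} {m : ℤ} (ha : 0 < a) (hab : a < b) (hm : m < 0) :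
    b ^ m < a ^ m := by
  have h := zpow_lt_zpow_left₀ (neg_pos.2 hm) (inv_nonneg.2 (ha.trans hab).le)
    (inv_strictAnti₀ ha hab)
  rwa [inv_zpow', inv_zpow', neg_neg] at h

section Barrier

variable {F : Type*} [NormedAddCommGroup F] [InnerProductSpace ℝ F] (q : F) (m : ℤ) {x : F}

theorem contDiffAt_normSq_sub_zpow (hx : x ≠ q) {k : WithTop ℕ∞} :
    ContDiffAt ℝ k (fun y => (‖y - q‖ ^ 2) ^ m) x :=
  (contDiffAt_zpow (by simpa [sub_eq_zero] using hx)).comp x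
    ((contDiff_norm_sq ℝ).comp (contDiff_id.sub contDiff_const)).contDiffAt

theorem hasFDerivAt_normSq_sub_zpow (hx : x ≠ q) :
    HasFDerivAt (fun y => (‖y - q‖ ^ 2) ^ m)
      ((2 * m * (‖x - q‖ ^ 2) ^ (m - 1)) • innerSL ℝ (x - q)) x := by
  refine ((hasDerivAt_zpow m _ (Or.inl (by simpa [sub_eq_zero] using hx))).comp_hasFDerivAt x
    (hasFDerivAt_sub_const q).norm_sq).congr_fderiv ?_
  ext v
  simp only [smul_apply, ContinuousLinearMap.comp_apply, innerSL_apply_apply,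
    ContinuousLinearMap.id_apply, smul_eq_mul, nsmul_eq_mul]
  push_cast
  ring

theorem fderiv_normSq_sub_zpow_apply (hx : x ≠ q) (v : F) :
    fderiv ℝ (fun y => (‖y - q‖ ^ 2) ^ m) x v = 2 * m * (‖x - q‖ ^ 2) ^ (m - 1) * ⟪x - q, v⟫ := by
  rw [(hasFDerivAt_normSq_sub_zpow q m hx).fderiv, smul_apply, innerSL_apply_apply, smul_eq_mul]

theorem fderiv_fderiv_normSq_sub_zpow_apply (hx : x ≠ q) (v : F) :
    fderiv ℝ (fun y => fderiv ℝ (fun y => (‖y - q‖ ^ 2) ^ m) y v) x v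
      = 2 * m * ((‖x - q‖ ^ 2) ^ (m - 1) * ‖v‖ ^ 2
        + 2 * (m - 1) * (‖x - q‖ ^ 2) ^ (m - 2) * ⟪x - q, v⟫ ^ 2) := by
  have hev : (fun y => fderiv ℝ (fun y => (‖y - q‖ ^ 2) ^ m) y v) =ᶠ[𝓝 x]
      fun y => 2 * m * (‖y - q‖ ^ 2) ^ (m - 1) * ⟪y - q, v⟫ := by
    filter_upwards [isOpen_ne.mem_nhds hx] with y hy
    exact fderiv_normSq_sub_zpow_apply q m hy v
  have h := ((hasFDerivAt_normSq_sub_zpow q (m - 1) hx).const_mul (2 * m)).fun_mul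
    ((hasFDerivAt_sub_const q).inner ℝ (hasFDerivAt_const v x))
  rw [hev.fderiv_eq, h.fderiv]
  simp only [add_apply, smul_apply, ContinuousLinearMap.comp_apply, innerSL_apply_apply,
    ContinuousLinearMap.prod_apply, fderivInnerCLM_apply, ContinuousLinearMap.id_apply,
    zero_apply, inner_zero_right, smul_eq_mul, real_inner_self_eq_norm_sq]
  rw [show m - 1 - 1 = m - 2 by ring]
  push_cast
  ring

end Barrier

theorem laplacian_normSq_sub_zpow {n : ℕ} (q : EuclideanSpace ℝ (Fin n)) (m : ℤ)
    {x : EuclideanSpace ℝ (Fin n)} (hx : x ≠ q) :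
    laplacian (fun y => (‖y - q‖ ^ 2) ^ m) x
      = 2 * m * (2 * m + n - 2) * (‖x - q‖ ^ 2) ^ (m - 1) := by
  have hψ : ‖x - q‖ ^ 2 ≠ 0 := by simpa [sub_eq_zero] using hx
  have hsq : ∑ i : Fin n, ⟪x - q, EuclideanSpace.single i (1 : ℝ)⟫ ^ 2 = ‖x - q‖ ^ 2 := by
    simp [EuclideanSpace.inner_single_right, EuclideanSpace.real_norm_sq_eq]
  simp only [laplacian, fderiv_fderiv_normSq_sub_zpow_apply q m hx, PiLp.norm_single,
    norm_one, one_pow, mul_one, Finset.sum_add_distrib, ← Finset.mul_sum, hsq, Finset.sum_const,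
    Finset.card_univ, Fintype.card_fin, nsmul_eq_mul]
  rw [show (‖x - q‖ ^ 2) ^ (m - 1) = (‖x - q‖ ^ 2) ^ (m - 2) * ‖x - q‖ ^ 2 by
    rw [← zpow_add_one₀ hψ]; ring_nf]
  ring

section Comparison

variable {n : ℕ} {Ω : Set (EuclideanSpace ℝ (Fin n))} {u : EuclideanSpace ℝ (Fin n) → ℝ} {s : ℝ}

/-- `u + s (w - B) / (A - B) - s` is strictly subharmonic on `Ω ∩ V` and nonpositive on its
frontier. -/
theorem mul_le_of_barrier {V : Set (EuclideanSpace ℝ (Fin n))} (hΩ : IsOpen Ω) (hV : IsOpen V)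
    (hVb : Bornology.IsBounded V) {w : EuclideanSpace ℝ (Fin n) → ℝ}
    (huc : ContinuousOn u (closure Ω)) (hu : ContDiffOn ℝ 2 u Ω)
    (hΔu : ∀ x ∈ Ω, 0 ≤ laplacian u x) (hwc : ContinuousOn w (closure Ω))
    (hw : ContDiffOn ℝ 2 w Ω) (hΔw : ∀ x ∈ Ω, 0 < laplacian w x) {A B : ℝ} (hs : 0 < s)
    (hBA : B < A) (hus : ∀ x ∈ Ω, u x ≤ s) (hufr : ∀ x ∈ frontier Ω, u x ≤ 0)
    (hwA : ∀ x ∈ frontier Ω, w x ≤ A) (hwB : ∀ x ∈ Ω \ V, w x ≤ B)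
    {z : EuclideanSpace ℝ (Fin n)} (hz : z ∈ Ω ∩ V) :
    (A - B) * u z ≤ s * (A - w z) := by
  have hAB : 0 < A - B := sub_pos.2 hBA
  set κ := s / (A - B)
  have hκ : 0 < κ := div_pos hs hAB
  have hκAB : κ * (A - B) = s := div_mul_cancel₀ s hAB.ne'
  have hD : IsOpen (Ω ∩ V) := hΩ.inter hV
  have hfz := nonpos_of_laplacian_pos (f := fun y => u y + κ * w y - (κ * B + s)) hD
    (hVb.subset inter_subset_right)
    (((huc.add (continuousOn_const.mul hwc)).sub continuousOn_const).mono
      (closure_mono inter_subset_left))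
    (((hu.add (contDiffOn_const.mul hw)).sub contDiffOn_const).mono inter_subset_left)
    (fun y hy => by
      have hy' := hΩ.mem_nhds hy.1
      rw [laplacian_sub_const, laplacian_add (hu.contDiffAt hy')
        (contDiffAt_const.mul (hw.contDiffAt hy')), laplacian_const_mul]
      nlinarith [hΔu y hy.1, hΔw y hy.1])
    (fun y hy => by
      have hyD : y ∉ Ω ∩ V := fun h => hD.inter_frontier_eq.subset ⟨h, hy⟩
      have hyΩ : y ∈ closure Ω := closure_mono inter_subset_left (frontier_subset_closure hy)
      by_cases hyΩ' : y ∈ Ω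
      · nlinarith [hus y hyΩ', hwB y ⟨hyΩ', fun h => hyD ⟨hyΩ', h⟩⟩]
      · have hyfr : y ∈ frontier Ω := by rw [frontier, hΩ.interior_eq]; exact ⟨hyΩ, hyΩ'⟩
        nlinarith [hufr y hyfr, hwA y hyfr])
    z hz
  linear_combination mul_le_mul_of_nonneg_left (sub_nonpos.1 hfz) hAB.le + (B - w z) * hκAB

theorem mul_le_of_radial_barrier (hn : 1 ≤ n) (hΩ : IsOpen Ω) (huc : ContinuousOn u (closure Ω))
    (hu : ContDiffOn ℝ 2 u Ω) (hΔu : ∀ x ∈ Ω, 0 ≤ laplacian u x) (hs : 0 < s)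
    (hus : ∀ x ∈ Ω, u x ≤ s) (hufr : ∀ x ∈ frontier Ω, u x ≤ 0) {q : EuclideanSpace ℝ (Fin n)}
    {a R : ℝ} (ha : 0 < a) (haR : a < R) (hfar : ∀ x ∈ closure Ω, a ≤ ‖x - q‖)
    {z : EuclideanSpace ℝ (Fin n)} (hz : z ∈ Ω) (hzR : ‖z - q‖ < R) :
    ((a ^ 2) ^ (-(n : ℤ)) - (R ^ 2) ^ (-(n : ℤ))) * u z
      ≤ s * ((a ^ 2) ^ (-(n : ℤ)) - (‖z - q‖ ^ 2) ^ (-(n : ℤ))) := by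
  have hq : ∀ x ∈ closure Ω, x ≠ q := fun x hx hxq => by
    have := hfar x hx
    simp [hxq] at this
    linarith
  have hanti : ∀ {b t : ℝ}, 0 < b → b ≤ t → (t ^ 2) ^ (-(n : ℤ)) ≤ (b ^ 2) ^ (-(n : ℤ)) :=
    fun hb hbt => zpow_le_zpow_left_of_nonpos₀ (by positivity)
      (pow_le_pow_left₀ hb.le hbt 2) (by simp)
  refine mul_le_of_barrier hΩ Metric.isOpen_ball Metric.isBounded_ball huc hu hΔu
    (fun x hx =>
      (contDiffAt_normSq_sub_zpow q _ (hq x hx) (k := 0)).continuousAt.continuousWithinAt)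
    (fun x hx => (contDiffAt_normSq_sub_zpow q _ (hq x (subset_closure hx))).contDiffWithinAt)
    (fun x hx => ?_) hs ?_ hus hufr
    (fun x hx => hanti ha (hfar x (frontier_subset_closure hx)))
    (fun x hx => hanti (ha.trans haR) (by simpa [dist_eq_norm] using hx.2))
    ⟨hz, by simpa [dist_eq_norm] using hzR⟩
  · have hxq : x ≠ q := hq x (subset_closure hx)
    rw [laplacian_normSq_sub_zpow q _ hxq]
    have hψ : 0 < ‖x - q‖ ^ 2 := pow_pos (norm_pos_iff.2 (sub_ne_zero.2 hxq)) 2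
    have hn' : (0 : ℝ) < n := by exact_mod_cast hn
    rw [show (2 : ℝ) * (-(n : ℤ) : ℤ) * (2 * (-(n : ℤ) : ℤ) + n - 2) = 2 * n * (n + 2) by
      push_cast; ring]
    positivity
  · exact zpow_lt_zpow_left_of_neg₀ (by positivity) (pow_lt_pow_left₀ haR ha.le two_ne_zero)
      (by simp; omega)

end Comparison

theorem mul_le_inner_of_norm_sub_le {F : Type*} [NormedAddCommGroup F] [InnerProductSpace ℝ F]
    {p e x : F} {c t : ℝ} (he : ‖e‖ = 1) (hc0 : 0 ≤ c) (hc1 : c ≤ 1) (ht : 0 ≤ t)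
    (hx : ‖x - (p + t • e)‖ ≤ (1 - c) / 2 * t) : ‖x - p‖ * c ≤ ⟪x - p, e⟫ := by
  have hxp : x - p = (x - (p + t • e)) + t • e := by abel
  have hinner : ⟪x - p, e⟫ = ⟪x - (p + t • e), e⟫ + t := by
    rw [hxp, inner_add_left, real_inner_smul_left, real_inner_self_eq_norm_sq, he]
    ring
  have hlow : -‖x - (p + t • e)‖ ≤ ⟪x - (p + t • e), e⟫ := by
    simpa [he] using neg_le_of_abs_le (abs_real_inner_le_norm (x - (p + t • e)) e)
  have hnorm : ‖x - p‖ ≤ ‖x - (p + t • e)‖ + t := by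
    rw [hxp]
    refine (norm_add_le _ _).trans ?_
    rw [norm_smul, he, Real.norm_of_nonneg ht, mul_one]
  nlinarith [norm_nonneg (x - (p + t • e))]

theorem nonpos_of_forall_le_mul {α : Type*} {S : Set α} {f : α → ℝ} (hbdd : BddAbove (f '' S))
    {ρ : ℝ} (hρ : ρ < 1) (h : ∀ s, 0 < s → (∀ x ∈ S, f x ≤ s) → ∀ x ∈ S, f x ≤ ρ * s) :
    ∀ x ∈ S, f x ≤ 0 := by
  intro x hx
  have hle : ∀ y ∈ S, f y ≤ sSup (f '' S) := fun y hy => le_csSup hbdd (mem_image_of_mem f hy)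
  by_contra! hpos
  have hs : 0 < sSup (f '' S) := hpos.trans_le (hle x hx)
  have : sSup (f '' S) ≤ ρ * sSup (f '' S) :=
    csSup_le ⟨f x, mem_image_of_mem f hx⟩ (by rintro _ ⟨y, hy, rfl⟩; exact h _ hs hle y hy)
  nlinarith

section Cone

variable {n : ℕ} {Ω : Set (EuclideanSpace ℝ (Fin n))} {p e : EuclideanSpace ℝ (Fin n)} {c : ℝ}
  {u : EuclideanSpace ℝ (Fin n) → ℝ}

theorem exists_lt_one_forall_le_mul_of_closure_outside_cone (hn : 1 ≤ n) (hΩ : IsOpen Ω)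
    (he : ‖e‖ = 1) (hc0 : 0 ≤ c) (hc1 : c < 1)
    (hcone : ∀ x ∈ closure Ω, ⟪x - p, e⟫ < ‖x - p‖ * c) (huc : ContinuousOn u (closure Ω))
    (hu : ContDiffOn ℝ 2 u Ω) (hΔu : ∀ x ∈ Ω, 0 ≤ laplacian u x)
    (hufr : ∀ x ∈ frontier Ω, u x ≤ 0) :
    ∃ ρ < 1, ∀ s, 0 < s → (∀ x ∈ Ω, u x ≤ s) → ∀ z ∈ Ω, u z ≤ ρ * s := by
  set φ : ℝ → ℝ := fun t => (t ^ 2) ^ (-(n : ℤ)) with hφ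
  have hφ_mul : ∀ a t, φ (a * t) = φ a * φ t := fun a t => by simp only [hφ, mul_pow, mul_zpow]
  have hφ_anti : ∀ {a b : ℝ}, 0 < a → a < b → φ b < φ a := fun ha hab =>
    zpow_lt_zpow_left_of_neg₀ (by positivity) (pow_lt_pow_left₀ hab ha.le two_ne_zero)
      (by simp; omega)
  set δ := (1 - c) / 2
  have hδ : 0 < δ := by simp only [δ]; linarith
  have h4δ : φ 4 < φ δ := hφ_anti hδ (by simp only [δ]; linarith)
  have h43 : φ 4 < φ 3 := hφ_anti three_pos (by norm_num)
  -- barrier about `q = p + t e` with radii `δ t < 3 t < 4 t`; by homogeneity of `φ` the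
  -- resulting factor does not depend on `t`
  refine ⟨(φ δ - φ 3) / (φ δ - φ 4), (div_lt_one (by linarith)).2 (by linarith),
    fun s hs hus z hz => ?_⟩
  have hzp : z ≠ p := fun h => by simpa [h] using hcone z (subset_closure hz)
  set t := ‖z - p‖ / 2
  have ht : 0 < t := half_pos (norm_pos_iff.2 (sub_ne_zero.2 hzp))
  set q := p + t • e
  have hfar : ∀ x ∈ closure Ω, δ * t ≤ ‖x - q‖ := fun x hx => by
    by_contra! h
    exact (hcone x hx).not_ge (mul_le_inner_of_norm_sub_le he hc0 hc1.le ht.le h.le)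
  have hzq : ‖z - q‖ ≤ 3 * t := by
    calc ‖z - q‖ = ‖(z - p) - t • e‖ := by congr 1; simp only [q]; abel
      _ ≤ ‖z - p‖ + ‖t • e‖ := norm_sub_le _ _
      _ = 3 * t := by rw [norm_smul, he, Real.norm_of_nonneg ht.le]; simp only [t]; ring
  have hbar := mul_le_of_radial_barrier hn hΩ huc hu hΔu hs hus hufr (mul_pos hδ ht)
    (mul_lt_mul_of_pos_right (show δ < 4 by simp only [δ]; linarith) ht) hfar hz (by linarith)
  have hz3 : φ (3 * t) ≤ (‖z - q‖ ^ 2) ^ (-(n : ℤ)) :=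
    zpow_le_zpow_left_of_nonpos₀ (pow_pos ((mul_pos hδ ht).trans_le (hfar z (subset_closure hz))) 2)
      (pow_le_pow_left₀ (norm_nonneg _) hzq 2) (by simp)
  change (φ (δ * t) - φ (4 * t)) * u z ≤ s * (φ (δ * t) - _) at hbar
  rw [hφ_mul, hφ_mul] at hbar
  rw [hφ_mul] at hz3
  have hφt : 0 < φ t := zpow_pos (pow_pos ht 2) _
  rw [div_mul_eq_mul_div, le_div_iff₀ (by linarith)]
  nlinarith

theorem nonpos_of_closure_outside_cone (hn : 1 ≤ n) (hΩ : IsOpen Ω) (he : ‖e‖ = 1)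
    (hc0 : 0 ≤ c) (hc1 : c < 1) (hcone : ∀ x ∈ closure Ω, ⟪x - p, e⟫ < ‖x - p‖ * c)
    (hbdd : BddAbove (u '' Ω)) (huc : ContinuousOn u (closure Ω)) (hu : ContDiffOn ℝ 2 u Ω)
    (hΔu : ∀ x ∈ Ω, 0 ≤ laplacian u x) (hufr : ∀ x ∈ frontier Ω, u x ≤ 0) :
    ∀ x ∈ Ω, u x ≤ 0 := by
  obtain ⟨ρ, hρ, h⟩ :=
    exists_lt_one_forall_le_mul_of_closure_outside_cone hn hΩ he hc0 hc1 hcone huc hu hΔu hufr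
  exact nonpos_of_forall_le_mul hbdd hρ h

end Cone

theorem dirichlet_parabolic_complement_of_cone_general
    (n : ℕ) (hn : 2 ≤ n)
    (Ω : Set (EuclideanSpace ℝ (Fin n)))
    (hΩopen : IsOpen Ω)
    (p e : EuclideanSpace ℝ (Fin n)) (θ : ℝ)
    (he : ‖e‖ = 1) (hθ₀ : 0 < θ) (hθ₁ : θ ≤ Real.pi / 2)
    -- the closure of Ω is contained in the complement of the cone
    -- C = {x : ⟨x − p, e⟩ ≥ ‖x − p‖·cos θ}
    (hcone : ∀ x ∈ closure Ω, ⟪x - p, e⟫ < ‖x - p‖ * Real.cos θ) :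
    ∀ u : EuclideanSpace ℝ (Fin n) → ℝ,
      (∃ C : ℝ, ∀ x ∈ closure Ω, |u x| ≤ C) →
      ContinuousOn u (closure Ω) →
      ContDiffOn ℝ 2 u Ω →
      (∀ x ∈ Ω, laplacian u x = 0) →
      (∀ x ∈ frontier Ω, u x = 0) →
      ∀ x ∈ Ω, u x = 0 := by
  intro u ⟨C, hC⟩ huc hu hΔu hufr x hx
  have hc0 : 0 ≤ Real.cos θ :=
    Real.cos_nonneg_of_mem_Icc ⟨by linarith [Real.pi_pos], hθ₁⟩
  have hc1 : Real.cos θ < 1 := by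
    simpa using Real.cos_lt_cos_of_nonneg_of_le_pi_div_two le_rfl hθ₁ hθ₀
  have hmax := fun v => nonpos_of_closure_outside_cone (u := v) (by omega) hΩopen he hc0 hc1 hcone
  refine le_antisymm
    (hmax u ?_ huc hu (fun y hy => (hΔu y hy).ge) (fun y hy => (hufr y hy).le) x hx)
    (neg_nonpos.1 (hmax (fun y => -u y) ?_ huc.neg hu.neg
      (fun y hy => by rw [laplacian_neg, hΔu y hy, neg_zero])
      (fun y hy => by rw [hufr y hy, neg_zero]) x hx))
  · exact ⟨C, by rintro _ ⟨y, hy, rfl⟩; exact (abs_le.1 (hC y (subset_closure hy))).2⟩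
  · exact ⟨C, by rintro _ ⟨y, hy, rfl⟩; exact neg_le.1 (abs_le.1 (hC y (subset_closure hy))).1⟩

/-- A domain contained in the complement of a non-degenerate solid cone is
Dirichlet parabolic. -/
theorem dirichlet_parabolic_complement_of_cone
    (n : ℕ) (hn : 2 ≤ n)
    (Ω : Set (EuclideanSpace ℝ (Fin n)))
    (hΩopen : IsOpen Ω) (hΩconn : IsConnected Ω)
    (p e : EuclideanSpace ℝ (Fin n)) (θ : ℝ)
    (he : ‖e‖ = 1) (hθ₀ : 0 < θ) (hθ₁ : θ ≤ Real.pi / 2)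
    -- the closure of Ω is contained in the complement of the cone
    -- C = {x : ⟨x − p, e⟩ ≥ ‖x − p‖·cos θ}
    (hcone : ∀ x ∈ closure Ω, ⟪x - p, e⟫ < ‖x - p‖ * Real.cos θ) :
    ∀ u : EuclideanSpace ℝ (Fin n) → ℝ,
      (∃ C : ℝ, ∀ x ∈ closure Ω, |u x| ≤ C) →
      ContinuousOn u (closure Ω) →
      ContDiffOn ℝ 2 u Ω →
      (∀ x ∈ Ω, laplacian u x = 0) →
      (∀ x ∈ frontier Ω, u x = 0) →
      ∀ x ∈ Ω, u x = 0 :=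
  dirichlet_parabolic_complement_of_cone_general n hn Ω hΩopen p e θ he hθ₀ hθ₁ hcone
end
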